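/- Let à be the (n+1)×(n+1) block diagonal matrix with blocks B_k = (1/h^d)^{n-k} M^{⊗(n-k)} ⊗ K for k = 0,...,n (so B_n = K), where M is symmetric positive definite with λ_max(M) ≤ h^d, λ_min(M) ≥ (h/3)^d, and K is symmetric positive definite. Then κ(Ã) ≤ 3^{nd} κ(K). -/

import Mathlib

/-!
Every block of `Ã` is a positive multiple of `M^{⊗m} ⊗ K` with `m ≤ n`. In the Loewner order,
Kronecker products multiply scalar bounds, so `(h/3)^d ≤ M ≤ h^d` and `λ_min(K) ≤ K ≤ λ_max(K)`
squeeze the block `(1/h^d)^m M^{⊗m} ⊗ K` between `3^{-md} λ_min(K)` and `λ_max(K)`. A block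
diagonal matrix inherits every bound shared by its blocks, hence all eigenvalues of `Ã` lie in
`[3^{-nd} λ_min(K), λ_max(K)]`.
-/

open Matrix
open scoped MatrixOrder Kronecker ComplexOrder

namespace Matrix

section Loewner

variable {𝕜 : Type*} [RCLike 𝕜]

lemma submatrix_mono {ι κ : Type*} {A B : Matrix ι ι 𝕜} (hAB : A ≤ B) (e : κ → ι) :
    A.submatrix e e ≤ B.submatrix e e :=
  (le_iff.mp hAB).submatrix e

lemma blockDiagonal'_mono {o : Type*} [Fintype o] [DecidableEq o] {m : o → Type*}
    [∀ k, Fintype (m k)] [∀ k, DecidableEq (m k)] {A B : (k : o) → Matrix (m k) (m k) 𝕜}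
    (hAB : ∀ k, A k ≤ B k) : blockDiagonal' A ≤ blockDiagonal' B := by
  choose C hC using fun k => CStarAlgebra.nonneg_iff_eq_star_mul_self.mp (sub_nonneg.mpr (hAB k))
  have hBA : B - A = fun k => (C k)ᴴ * C k := funext hC
  rw [le_iff, ← blockDiagonal'_sub, hBA, blockDiagonal'_mul, ← blockDiagonal'_conjTranspose]
  exact posSemidef_conjTranspose_mul_self _

lemma blockDiagonal'_smul_one {o : Type*} [DecidableEq o] {m : o → Type*}
    [∀ k, DecidableEq (m k)] (r : ℝ) :
    (blockDiagonal' fun k => r • (1 : Matrix (m k) (m k) 𝕜)) = r • 1 := by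
  rw [← blockDiagonal'_one, ← blockDiagonal'_smul]
  rfl

variable {ι κ : Type*} [DecidableEq ι] [DecidableEq κ]

lemma smul_one_kronecker_smul_one (a b : ℝ) :
    (a • 1 : Matrix ι ι 𝕜) ⊗ₖ (b • 1 : Matrix κ κ 𝕜) = (a * b) • 1 := by
  rw [smul_kronecker, kronecker_smul, one_kronecker_one, smul_smul]

variable [Fintype ι] [Fintype κ]

lemma smul_one_nonneg {r : ℝ} (hr : 0 ≤ r) : 0 ≤ r • (1 : Matrix ι ι 𝕜) := by
  rw [← Algebra.algebraMap_eq_smul_one]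
  exact algebraMap_nonneg _ hr

lemma kronecker_le_smul_one {A : Matrix ι ι 𝕜} {B : Matrix κ κ 𝕜} {a b : ℝ} (ha : 0 ≤ a)
    (hA : A ≤ a • 1) (hB₀ : 0 ≤ B) (hB : B ≤ b • 1) : A ⊗ₖ B ≤ (a * b) • 1 := by
  have hsplit : (a • 1 - A) ⊗ₖ B + (a • 1 : Matrix ι ι 𝕜) ⊗ₖ (b • 1 - B) + A ⊗ₖ B =
      (a • 1 : Matrix ι ι 𝕜) ⊗ₖ (b • 1 : Matrix κ κ 𝕜) := by
    rw [add_right_comm, ← add_kronecker, sub_add_cancel, ← kronecker_add, add_sub_cancel]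
  rw [le_iff, ← smul_one_kronecker_smul_one, ← hsplit, add_sub_cancel_right]
  exact ((le_iff.mp hA).kronecker hB₀.posSemidef).add
    ((smul_one_nonneg ha).posSemidef.kronecker (le_iff.mp hB))

lemma smul_one_le_kronecker {A : Matrix ι ι 𝕜} {B : Matrix κ κ 𝕜} {a b : ℝ} (ha : 0 ≤ a)
    (hb : 0 ≤ b) (hA : a • 1 ≤ A) (hB : b • 1 ≤ B) : (a * b) • 1 ≤ A ⊗ₖ B := by
  have hsplit : (A - a • 1) ⊗ₖ B + (a • 1 : Matrix ι ι 𝕜) ⊗ₖ (B - b • 1) +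
      (a • 1 : Matrix ι ι 𝕜) ⊗ₖ (b • 1 : Matrix κ κ 𝕜) = A ⊗ₖ B := by
    rw [add_assoc, ← kronecker_add, sub_add_cancel, ← add_kronecker, sub_add_cancel]
  rw [le_iff, ← smul_one_kronecker_smul_one, ← hsplit, add_sub_cancel_right]
  exact ((le_iff.mp hA).kronecker ((smul_one_nonneg hb).trans hB).posSemidef).add
    ((smul_one_nonneg ha).posSemidef.kronecker (le_iff.mp hB))

end Loewner

section Eigenvalues

variable {𝕜 : Type*} [RCLike 𝕜] {ι : Type*} [Fintype ι] [DecidableEq ι] {A : Matrix ι ι 𝕜}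

lemma IsHermitian.le_smul_one_iff (hA : A.IsHermitian) (r : ℝ) :
    A ≤ r • 1 ↔ ∀ i, hA.eigenvalues i ≤ r := by
  rw [← Algebra.algebraMap_eq_smul_one, le_algebraMap_iff_spectrum_le hA.isSelfAdjoint,
    hA.spectrum_real_eq_range_eigenvalues, Set.forall_mem_range]

lemma IsHermitian.smul_one_le_iff (hA : A.IsHermitian) (r : ℝ) :
    r • 1 ≤ A ↔ ∀ i, r ≤ hA.eigenvalues i := by
  rw [← Algebra.algebraMap_eq_smul_one, algebraMap_le_iff_le_spectrum hA.isSelfAdjoint,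
    hA.spectrum_real_eq_range_eigenvalues, Set.forall_mem_range]

lemma IsHermitian.le_iSup_eigenvalues_smul_one (hA : A.IsHermitian) :
    A ≤ (⨆ i, hA.eigenvalues i) • 1 :=
  (hA.le_smul_one_iff _).mpr fun i => le_ciSup (Set.finite_range _).bddAbove i

lemma IsHermitian.iInf_eigenvalues_smul_one_le (hA : A.IsHermitian) :
    (⨅ i, hA.eigenvalues i) • 1 ≤ A :=
  (hA.smul_one_le_iff _).mpr fun i => ciInf_le (Set.finite_range _).bddBelow i

lemma PosDef.iInf_eigenvalues_pos [Nonempty ι] (hA : A.PosDef) :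
    0 < ⨅ i, hA.1.eigenvalues i := by
  obtain ⟨i, hi⟩ := exists_eq_ciInf_of_finite (f := hA.1.eigenvalues)
  exact hi ▸ hA.eigenvalues_pos i

lemma IsHermitian.iSup_div_iInf_eigenvalues_le [Nonempty ι] (hA : A.IsHermitian) {lo hi : ℝ}
    (hlo : 0 < lo) (hA_lo : lo • 1 ≤ A) (hA_hi : A ≤ hi • 1) :
    (⨆ i, hA.eigenvalues i) / (⨅ i, hA.eigenvalues i) ≤ hi / lo := by
  have hmax : ⨆ i, hA.eigenvalues i ≤ hi := ciSup_le ((hA.le_smul_one_iff hi).mp hA_hi)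
  have hmin : lo ≤ ⨅ i, hA.eigenvalues i := le_ciInf ((hA.smul_one_le_iff lo).mp hA_lo)
  have hmin_le_max : ⨅ i, hA.eigenvalues i ≤ ⨆ i, hA.eigenvalues i :=
    ciInf_le_ciSup (Set.finite_range _).bddBelow (Set.finite_range _).bddAbove
  exact div_le_div₀ (hlo.le.trans (hmin.trans (hmin_le_max.trans hmax))) hmax hlo hmin

end Eigenvalues

section KroneckerPow

variable {α : Type*} {m n : Type*}

def kroneckerPow [CommMonoid α] (M : Matrix m m α) (k : ℕ) : Matrix (Fin k → m) (Fin k → m) α :=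
  of fun x y => ∏ l, M (x l) (y l)

lemma kroneckerPow_zero [CommMonoidWithZero α] [DecidableEq m] (M : Matrix m m α) :
    kroneckerPow M 0 = 1 := by
  ext x y
  rw [Subsingleton.elim x y]
  simp [kroneckerPow]

lemma kroneckerPow_succ [CommSemiring α] (M : Matrix m m α) (k : ℕ) :
    kroneckerPow M (k + 1) = (M ⊗ₖ kroneckerPow M k).submatrix
      (Fin.consEquiv fun _ => m).symm (Fin.consEquiv fun _ => m).symm := by
  ext x y
  simp [kroneckerPow, Fin.prod_univ_succ, Fin.tail]

lemma of_dite_eq_blockDiagonal' [CommSemiring α] {o : Type*} [DecidableEq o] (N : o → ℕ)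
    (c : o → α) (M : Matrix m m α) (K : Matrix n n α) :
    (of fun (a b : Σ k, (Fin (N k) → m) × n) =>
      if hk : a.1 = b.1 then
        c a.1 * (∏ l, M (a.2.1 l) (b.2.1 (Fin.cast (congrArg N hk) l))) * K a.2.2 b.2.2
      else 0) = blockDiagonal' fun k => c k • (kroneckerPow M (N k) ⊗ₖ K) := by
  ext ⟨k, x, i⟩ ⟨k', y, j⟩
  by_cases hk : k = k'
  · subst hk
    simp [blockDiagonal'_apply, kroneckerPow, mul_assoc]
  · simp [blockDiagonal'_apply, hk]

variable {𝕜 : Type*} [RCLike 𝕜] [Fintype m] [DecidableEq m] [Fintype n] [DecidableEq n]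
  {M : Matrix m m 𝕜} {K : Matrix n n 𝕜}

lemma smul_one_le_kroneckerPow {a : ℝ} (ha : 0 ≤ a) (hM : a • 1 ≤ M) (k : ℕ) :
    a ^ k • 1 ≤ kroneckerPow M k := by
  induction k with
  | zero => rw [pow_zero, one_smul, kroneckerPow_zero]
  | succ k ih =>
    rw [kroneckerPow_succ, pow_succ', ← submatrix_one_equiv (Fin.consEquiv fun _ => m).symm]
    exact submatrix_mono (smul_one_le_kronecker ha (pow_nonneg ha k) hM ih) _

lemma kroneckerPow_le_smul_one {b : ℝ} (hb : 0 ≤ b) (hM₀ : 0 ≤ M) (hM : M ≤ b • 1) (k : ℕ) :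
    kroneckerPow M k ≤ b ^ k • 1 := by
  have hpow₀ : ∀ k, 0 ≤ kroneckerPow M k := fun k =>
    (smul_one_nonneg (pow_nonneg le_rfl k)).trans
      (smul_one_le_kroneckerPow le_rfl (by rwa [zero_smul]) k)
  induction k with
  | zero => rw [pow_zero, one_smul, kroneckerPow_zero]
  | succ k ih =>
    rw [kroneckerPow_succ, pow_succ', ← submatrix_one_equiv (Fin.consEquiv fun _ => m).symm]
    exact submatrix_mono (kronecker_le_smul_one hb hM (hpow₀ k) ih) _

lemma smul_one_le_smul_kroneckerPow_kronecker {a c e : ℝ} (ha : 0 ≤ a) (hc : 0 ≤ c) (he : 0 ≤ e)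
    (hM : a • 1 ≤ M) (hK : e • 1 ≤ K) (k : ℕ) :
    ((c * a) ^ k * e) • 1 ≤ c ^ k • (kroneckerPow M k ⊗ₖ K) := by
  rw [mul_pow, mul_assoc, ← smul_smul]
  exact smul_le_smul_of_nonneg_left
    (smul_one_le_kronecker (pow_nonneg ha k) he (smul_one_le_kroneckerPow ha hM k) hK)
    (pow_nonneg hc k)

lemma smul_kroneckerPow_kronecker_le_smul_one {b c f : ℝ} (hb : 0 ≤ b) (hc : 0 ≤ c)
    (hM₀ : 0 ≤ M) (hM : M ≤ b • 1) (hK₀ : 0 ≤ K) (hK : K ≤ f • 1) (k : ℕ) :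
    c ^ k • (kroneckerPow M k ⊗ₖ K) ≤ ((c * b) ^ k * f) • 1 := by
  rw [mul_pow, mul_assoc, ← smul_smul]
  exact smul_le_smul_of_nonneg_left
    (kronecker_le_smul_one (pow_nonneg hb k) (kroneckerPow_le_smul_one hb hM₀ hM k) hK₀ hK)
    (pow_nonneg hc k)

variable {h : ℝ} {d : ℕ}

lemma smul_kroneckerPow_kronecker_le_smul_one_of_le_pow (hh : 0 < h) (hM₀ : 0 ≤ M)
    (hM : M ≤ (h ^ d) • 1) {f : ℝ} (hK₀ : 0 ≤ K) (hK : K ≤ f • 1) (k : ℕ) :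
    (1 / h ^ d) ^ k • (kroneckerPow M k ⊗ₖ K) ≤ f • 1 := by
  have := smul_kroneckerPow_kronecker_le_smul_one (c := 1 / h ^ d) (by positivity) (by positivity)
    hM₀ hM hK₀ hK k
  rwa [one_div_mul_cancel (by positivity), one_pow, one_mul] at this

lemma smul_one_le_smul_kroneckerPow_kronecker_of_pow_le (hh : 0 < h) (hM : (h / 3) ^ d • 1 ≤ M)
    {e : ℝ} (he : 0 ≤ e) (hK : e • 1 ≤ K) {k N : ℕ} (hkN : k ≤ N) :
    (e / 3 ^ (N * d)) • 1 ≤ (1 / h ^ d) ^ k • (kroneckerPow M k ⊗ₖ K) := by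
  refine le_trans ?_
    (smul_one_le_smul_kroneckerPow_kronecker (c := 1 / h ^ d) (by positivity) (by positivity)
      he hM hK k)
  have hratio : 1 / h ^ d * (h / 3) ^ d = (1 / 3) ^ d := by
    rw [div_pow, div_pow, one_pow]
    field_simp
  have hscalar : e / 3 ^ (N * d) ≤ ((1 / 3) ^ d) ^ k * e :=
    calc e / 3 ^ (N * d) = ((1 / 3) ^ d) ^ N * e := by
          rw [← pow_mul, mul_comm d N, div_pow, one_pow, one_div_mul_eq_div]
      _ ≤ ((1 / 3) ^ d) ^ k * e :=
          mul_le_mul_of_nonneg_right (pow_le_pow_of_le_one (by positivity)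
            (pow_le_one₀ (by norm_num) (by norm_num)) hkN) he
  rw [hratio]
  exact smul_le_smul_of_nonneg_right hscalar zero_le_one

end KroneckerPow

end Matrix

theorem stmt13 {p q n d : ℕ} (hq : 0 < q)
    (h : ℝ) (hh : 0 < h)
    (M : Matrix (Fin p) (Fin p) ℝ) (K : Matrix (Fin q) (Fin q) ℝ)
    (hM : M.PosDef) (hK : K.PosDef)
    (hMmax : ∀ i, hM.1.eigenvalues i ≤ h ^ d)
    (hMmin : ∀ i, (h / 3) ^ d ≤ hM.1.eigenvalues i)
    (Atil : Matrix (Σ k : Fin (n + 1), (Fin (n - (k : ℕ)) → Fin p) × Fin q)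
                   (Σ k : Fin (n + 1), (Fin (n - (k : ℕ)) → Fin p) × Fin q) ℝ)
    (hAdef : Atil = Matrix.of fun a b =>
      if hk : a.1 = b.1 then
        ((1 / h ^ d) ^ (n - (a.1 : ℕ))) *
          (∏ l, M (a.2.1 l) (b.2.1 (Fin.cast (by rw [hk]) l))) * K a.2.2 b.2.2
      else 0)
    (hAt : Atil.IsHermitian) :
    (⨆ i, hAt.eigenvalues i) / (⨅ i, hAt.eigenvalues i) ≤
      3 ^ (n * d) * ((⨆ i, hK.1.eigenvalues i) / (⨅ i, hK.1.eigenvalues i)) := by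
  have : Nonempty (Fin q) := ⟨⟨0, hq⟩⟩
  have : Nonempty (Σ k : Fin (n + 1), (Fin (n - (k : ℕ)) → Fin p) × Fin q) :=
    ⟨⟨Fin.last n, fun l => absurd l.2 (by simp), ⟨0, hq⟩⟩⟩
  set kmax := ⨆ i, hK.1.eigenvalues i
  set kmin := ⨅ i, hK.1.eigenvalues i
  have hkmin : 0 < kmin := hK.iInf_eigenvalues_pos
  have hblocks : Atil = blockDiagonal' fun k : Fin (n + 1) =>
      (1 / h ^ d) ^ (n - (k : ℕ)) • (kroneckerPow M (n - k) ⊗ₖ K) :=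
    hAdef.trans (of_dite_eq_blockDiagonal' (fun k : Fin (n + 1) => n - (k : ℕ))
      (fun k : Fin (n + 1) => (1 / h ^ d) ^ (n - (k : ℕ))) M K)
  have hA_hi : Atil ≤ kmax • 1 := by
    rw [hblocks, ← blockDiagonal'_smul_one]
    exact blockDiagonal'_mono fun k => smul_kroneckerPow_kronecker_le_smul_one_of_le_pow hh
      hM.posSemidef.nonneg ((hM.1.le_smul_one_iff _).mpr hMmax) hK.posSemidef.nonneg
      hK.1.le_iSup_eigenvalues_smul_one _
  have hA_lo : (kmin / 3 ^ (n * d)) • 1 ≤ Atil := by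
    rw [hblocks, ← blockDiagonal'_smul_one]
    exact blockDiagonal'_mono fun k => smul_one_le_smul_kroneckerPow_kronecker_of_pow_le hh
      ((hM.1.smul_one_le_iff _).mpr hMmin) hkmin.le hK.1.iInf_eigenvalues_smul_one_le
      (Nat.sub_le _ _)
  calc (⨆ i, hAt.eigenvalues i) / (⨅ i, hAt.eigenvalues i) ≤ kmax / (kmin / 3 ^ (n * d)) :=
        hAt.iSup_div_iInf_eigenvalues_le (by positivity) hA_lo hA_hi
    _ = 3 ^ (n * d) * (kmax / kmin) := by field_simp
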